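/- arXiv:2401.13663 — 5 statements merged into one kernel-verified Lean document; each statement's English description precedes it below -/
import Mathlib

section
/- Let A, B be 2×2 complex matrices such that [A,B] is diagonalizable, and set K(A) = (Tr A)² − 4 det(A). Denote by ad_A^n(B) the n-fold nested commutator [A,[A,…,[A,B]…]]. Then for every n ≥ 0: ad_A^{2n+1}(B) = K(A)^n · [A,B] and ad_A^{2n+2}(B) = K(A)^n · [A,[A,B]]. -/
/-- A 2×2 complex matrix is diagonalizable if it is similar to a diagonal matrix. -/
def IsDiagonalizable (M : Matrix (Fin 2) (Fin 2) ℂ) : Prop :=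
  ∃ P : Matrix (Fin 2) (Fin 2) ℂ, IsUnit P ∧ (P⁻¹ * M * P).IsDiag

set_option maxHeartbeats 1000000 in
/-- The key polynomial identity: `ad_A^3(B) = K(A) • ad_A(B)` for any 2×2 matrices. -/
lemma ad_cubed (A B : Matrix (Fin 2) (Fin 2) ℂ) :
    ⁅A, ⁅A, ⁅A, B⁆⁆⁆ = (A.trace ^ 2 - 4 * A.det) • ⁅A, B⁆ := by
  ext i j
  fin_cases i <;> fin_cases j <;>
  · simp only [Ring.lie_def, Matrix.sub_apply, Matrix.mul_apply, Matrix.smul_apply,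
      Matrix.trace_fin_two, Matrix.det_fin_two, Fin.sum_univ_two, smul_eq_mul,
      Fin.mk_zero, Fin.mk_one]
    ring

/-- for 2×2 matrices with `[A,B]` diagonalizable,
`ad_A^{2n+1}(B) = K(A)^n • [A,B]` and `ad_A^{2n+2}(B) = K(A)^n • [A,[A,B]]`,
where `K(A) = (Tr A)² - 4 det A`. -/
theorem nested_commutators_two_dim
    (A B : Matrix (Fin 2) (Fin 2) ℂ)
    (hA : IsDiagonalizable A) (hB : IsDiagonalizable B)
    (hC : IsDiagonalizable ⁅A, B⁆) :
    ∀ n : ℕ,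
      (fun X => ⁅A, X⁆)^[2 * n + 1] B
        = (A.trace ^ 2 - 4 * A.det) ^ n • ⁅A, B⁆ ∧
      (fun X => ⁅A, X⁆)^[2 * n + 2] B
        = (A.trace ^ 2 - 4 * A.det) ^ n • ⁅A, ⁅A, B⁆⁆ := by
  intro n
  induction n with
  | zero =>
    constructor
    · simp [Function.iterate_succ_apply', Function.iterate_one]
    · simp [Function.iterate_succ_apply']
  | succ k ih =>
    obtain ⟨ih1, ih2⟩ := ih
    have h1 : (fun X => ⁅A, X⁆)^[2 * (k + 1) + 1] B
        = (A.trace ^ 2 - 4 * A.det) ^ (k + 1) • ⁅A, B⁆ := by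
      have : 2 * (k + 1) + 1 = (2 * k + 2) + 1 := by ring
      rw [this, Function.iterate_succ_apply', ih2, (by intro c X Y; simp only [Ring.lie_def, Matrix.mul_smul, Matrix.smul_mul, smul_sub] :
        ∀ (c : ℂ) (X Y : Matrix (Fin 2) (Fin 2) ℂ), ⁅X, c • Y⁆ = c • ⁅X, Y⁆), ad_cubed, smul_smul,
        ← pow_succ]
    refine ⟨h1, ?_⟩
    have : 2 * (k + 1) + 2 = (2 * (k + 1) + 1) + 1 := by ring
    rw [this, Function.iterate_succ_apply', h1, (by intro c X Y; simp only [Ring.lie_def, Matrix.mul_smul, Matrix.smul_mul, smul_sub] :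
        ∀ (c : ℂ) (X Y : Matrix (Fin 2) (Fin 2) ℂ), ⁅X, c • Y⁆ = c • ⁅X, Y⁆)]
end

section
/- (Hadamard's lemma in 2 dimensions) Let A, B be 2×2 complex matrices with [A,B] diagonalizable, and let Δ_A be a square root of K(A) = (Tr A)² − 4 det A (the difference of the eigenvalues of A), assumed nonzero. Then exp(A) B exp(−A) = B + (sinh Δ_A)/Δ_A · [A,B] + (cosh Δ_A − 1)/Δ_A² · [A,[A,B]]. -/
open NormedSpace

private lemma exp_of_sq (M : Matrix (Fin 2) (Fin 2) ℂ) (u : ℂ)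
    (h : M * M = (u ^ 2) • 1) (hu : u ≠ 0) :
    exp M = Complex.cosh u • (1 : Matrix (Fin 2) (Fin 2) ℂ) + (Complex.sinh u / u) • M := by
  rw [exp_eq_tsum (𝕂 := ℂ)]
  refine HasSum.tsum_eq ?_
  have hpow : ∀ k : ℕ, M ^ (2 * k) = (u ^ (2 * k)) • (1 : Matrix (Fin 2) (Fin 2) ℂ) := by
    intro k
    rw [pow_mul, sq, h, smul_pow, one_pow, ← pow_mul]
  refine HasSum.even_add_odd ?_ ?_
  · have := (Complex.hasSum_cosh u).smul_const (1 : Matrix (Fin 2) (Fin 2) ℂ)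
    convert this using 2 with k
    · rfl
    rw [hpow k, smul_smul, div_eq_inv_mul]
  · have := ((Complex.hasSum_sinh u).div_const u).smul_const M
    convert this using 2 with k
    · rfl
    rw [pow_succ, pow_mul, sq, h, smul_pow, one_pow, ← pow_mul, smul_mul_assoc, one_mul,
      smul_smul]
    congr 1
    rw [div_right_comm, pow_succ, mul_div_cancel_right₀ _ hu, div_eq_inv_mul]

private lemma exp_scalar (c : ℂ) :
    exp (c • (1 : Matrix (Fin 2) (Fin 2) ℂ)) = Complex.exp c • 1 := by
  rw [exp_eq_tsum (𝕂 := ℂ), Complex.exp_eq_exp_ℂ]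
  refine HasSum.tsum_eq ?_
  have h := (NormedSpace.exp_series_hasSum_exp' (𝕂 := ℂ) c).smul_const
    (1 : Matrix (Fin 2) (Fin 2) ℂ)
  convert h using 2 with n
  · rfl
  simp [smul_pow, smul_smul]

open NormedSpace in
/-- Hadamard's lemma in 2 dimensions. -/
theorem hadamard_lemma_two_dim
    (A B : Matrix (Fin 2) (Fin 2) ℂ) (hC : IsDiagonalizable ⁅A, B⁆)
    (Δ : ℂ) (hΔ : Δ ≠ 0) (hΔ2 : Δ ^ 2 = A.trace ^ 2 - 4 * A.det) :
    exp A * B * exp (-A)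
      = B + (Complex.sinh Δ / Δ) • ⁅A, B⁆
        + ((Complex.cosh Δ - 1) / Δ ^ 2) • ⁅A, ⁅A, B⁆⁆ := by
  set t : ℂ := A.trace with ht
  set A₀ : Matrix (Fin 2) (Fin 2) ℂ := A - (t / 2) • 1 with hA₀
  have hu : Δ / 2 ≠ 0 := div_ne_zero hΔ two_ne_zero
  have hΔ2' : Δ ^ 2 = (A 0 0 + A 1 1) ^ 2 - 4 * (A 0 0 * A 1 1 - A 0 1 * A 1 0) := by
    rw [hΔ2, ht, Matrix.trace_fin_two, Matrix.det_fin_two]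
  have hsq : A₀ * A₀ = ((Δ / 2) ^ 2) • 1 := by
    ext i j
    have htr : t = A 0 0 + A 1 1 := by rw [ht, Matrix.trace_fin_two]
    fin_cases i <;> fin_cases j <;>
      simp [hA₀, Matrix.mul_apply, Fin.sum_univ_two, Matrix.one_apply, htr] <;>
      (first
        | ring1
        | linear_combination -hΔ2' / 4
        | linear_combination hΔ2' / 4)
  have hsq' : (-A₀) * (-A₀) = ((Δ / 2) ^ 2) • 1 := by rw [neg_mul_neg]; exact hsq
  have e1 := exp_of_sq A₀ (Δ / 2) hsq hu
  have e2 := exp_of_sq (-A₀) (Δ / 2) hsq' hu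
  have hAsplit : A = (t / 2) • 1 + A₀ := by rw [hA₀]; abel
  have hcomm : Commute ((t / 2) • (1 : Matrix (Fin 2) (Fin 2) ℂ)) A₀ := by
    apply Commute.smul_left
    exact Commute.one_left _
  have hexpA : exp A = Complex.exp (t / 2) • exp A₀ := by
    conv_lhs => rw [hAsplit]
    rw [Matrix.exp_add_of_commute _ _ hcomm, exp_scalar, smul_mul_assoc, one_mul]
  have hexpA' : exp (-A) = Complex.exp (-(t / 2)) • exp (-A₀) := by
    have hsplit' : -A = (-(t / 2)) • (1 : Matrix (Fin 2) (Fin 2) ℂ) + (-A₀) := by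
      rw [hA₀]; module
    rw [hsplit', Matrix.exp_add_of_commute _ _
      ((Commute.one_left (-A₀)).smul_left (-(t / 2))), exp_scalar, smul_mul_assoc, one_mul]
  have key : exp A * B * exp (-A) = exp A₀ * B * exp (-A₀) := by
    rw [hexpA, hexpA', smul_mul_assoc, smul_mul_assoc, mul_smul_comm, smul_smul,
      ← Complex.exp_add, add_neg_cancel, Complex.exp_zero, one_smul]
  have hbrack : ⁅A, B⁆ = A₀ * B - B * A₀ := by
    rw [Ring.lie_def, hA₀, sub_mul, mul_sub, smul_mul_assoc, Matrix.mul_smul, one_mul, mul_one]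
    abel
  have hbrack2 : ⁅A, ⁅A, B⁆⁆ = (2 * (Δ / 2) ^ 2) • B - (2 : ℂ) • (A₀ * B * A₀) := by
    rw [Ring.lie_def, hbrack]
    calc A * (A₀ * B - B * A₀) - (A₀ * B - B * A₀) * A
        = ((t / 2) • 1 + A₀) * (A₀ * B - B * A₀)
          - (A₀ * B - B * A₀) * ((t / 2) • 1 + A₀) := by rw [← hAsplit]
      _ = A₀ * A₀ * B + B * (A₀ * A₀) - (2 : ℂ) • (A₀ * B * A₀) := by
          simp only [add_mul, mul_add, sub_mul, mul_sub, smul_mul_assoc, Matrix.mul_smul,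
            one_mul, mul_one, two_smul, Matrix.mul_assoc]
          abel
      _ = (2 * (Δ / 2) ^ 2) • B - (2 : ℂ) • (A₀ * B * A₀) := by
          rw [hsq, smul_mul_assoc, Matrix.mul_smul, one_mul, mul_one, two_mul, add_smul]
          try abel
  rw [key, e1, e2, hbrack2, hbrack]
  have h1 : Complex.cosh (Δ / 2) ^ 2 - Complex.sinh (Δ / 2) ^ 2 = 1 :=
    Complex.cosh_sq_sub_sinh_sq _
  have hc2 : Complex.cosh Δ = 2 * Complex.cosh (Δ / 2) ^ 2 - 1 := by
    have := Complex.cosh_two_mul (Δ / 2)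
    rw [show 2 * (Δ / 2) = Δ by ring] at this
    linear_combination this - h1
  have hs2 : Complex.sinh Δ = 2 * Complex.sinh (Δ / 2) * Complex.cosh (Δ / 2) := by
    have := Complex.sinh_two_mul (Δ / 2)
    rw [show 2 * (Δ / 2) = Δ by ring] at this
    linear_combination this
  rw [hc2, hs2]
  simp only [mul_add, add_mul, mul_sub, sub_mul, smul_mul_assoc, Matrix.mul_smul,
    Matrix.mul_assoc, one_mul, mul_one, smul_smul, smul_sub, smul_add, smul_neg,
    mul_neg, neg_mul]
  match_scalars
  all_goals
    first
    | ring1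
    | (field_simp
       first
       | ring1
       | linear_combination Δ ^ 2 * h1
       | linear_combination -(Δ ^ 2) * h1
       | linear_combination 2 * Δ ^ 2 * h1
       | linear_combination -(2 * Δ ^ 2) * h1
       | linear_combination h1
       | linear_combination -h1
       | linear_combination 2 * h1
       | linear_combination -(2:ℂ) * h1
       | linear_combination 4 * Δ ^ 2 * h1
       | linear_combination -(4 * Δ ^ 2) * h1
       | linear_combination (4 * Δ ^ 2 - 2) * h1
       | linear_combination (2 - 4 * Δ ^ 2) * h1
       | linear_combination (Δ ^ 2 - 1) * h1
       | linear_combination (1 - Δ ^ 2) * h1)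
end

section
/- Let A, B be 2×2 complex matrices with [A,B] diagonalizable and Δ_A² = K(A) = (Tr A)² − 4 det A, Δ_A ≠ 0. Then exp(A) exp(B) = exp(B + (sinh Δ_A)/Δ_A · [A,B] + (cosh Δ_A − 1)/Δ_A² · [A,[A,B]]) · exp(A). -/
set_option maxHeartbeats 1000000 in
open NormedSpace in
/-- Exponential of a scalar multiple of an idempotent matrix. -/
lemma my_exp_smul_idem (Q : Matrix (Fin 2) (Fin 2) ℂ) (hQ : Q * Q = Q) (c : ℂ) :
    exp (c • Q) = 1 + (Complex.exp c - 1) • Q := by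
  letI : SeminormedRing (Matrix (Fin 2) (Fin 2) ℂ) := Matrix.linftyOpSemiNormedRing
  letI : NormedRing (Matrix (Fin 2) (Fin 2) ℂ) := Matrix.linftyOpNormedRing
  letI : NormedAlgebra ℂ (Matrix (Fin 2) (Fin 2) ℂ) := Matrix.linftyOpNormedAlgebra
  have hQn : ∀ n : ℕ, Q ^ (n + 1) = Q := by
    intro n
    induction n with
    | zero => simp
    | succ n ih => rw [pow_succ, ih, hQ]
  have hs : Summable fun n : ℕ => (Nat.factorial n : ℂ)⁻¹ • (c • Q) ^ n :=
    expSeries_summable' (𝕂 := ℂ) (c • Q)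
  have hsc : Summable fun n : ℕ => (Nat.factorial n : ℂ)⁻¹ * c ^ n := by
    simpa [smul_eq_mul] using expSeries_summable' (𝕂 := ℂ) c
  have hsc1 : Summable fun n : ℕ => (Nat.factorial (n+1) : ℂ)⁻¹ * c ^ (n + 1) :=
    (summable_nat_add_iff 1).2 hsc
  have hec : Complex.exp c = 1 + ∑' n : ℕ, (Nat.factorial (n+1) : ℂ)⁻¹ * c ^ (n + 1) := by
    rw [Complex.exp_eq_exp_ℂ, exp_eq_tsum ℂ]
    beta_reduce
    simp only [smul_eq_mul]
    rw [Summable.tsum_eq_zero_add hsc]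
    simp
  rw [exp_eq_tsum ℂ]
  beta_reduce
  rw [Summable.tsum_eq_zero_add hs]
  have : ∀ n : ℕ, (Nat.factorial (n+1) : ℂ)⁻¹ • (c • Q) ^ (n+1)
      = ((Nat.factorial (n+1) : ℂ)⁻¹ * c ^ (n+1)) • Q := by
    intro n
    rw [smul_pow, hQn, smul_smul]
  simp only [this]
  rw [Summable.tsum_smul_const hsc1]
  have : ∑' n : ℕ, (Nat.factorial (n+1) : ℂ)⁻¹ * c ^ (n + 1) = Complex.exp c - 1 := by
    rw [hec]; ring
  rw [this]
  simp

set_option maxHeartbeats 1000000 in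
open NormedSpace in
/-- exponentiated corollary of the 2-dimensional Hadamard lemma. -/
theorem hadamard_lemma_exp_two_dim
    (A B : Matrix (Fin 2) (Fin 2) ℂ) (hC : IsDiagonalizable ⁅A, B⁆)
    (Δ : ℂ) (hΔ : Δ ≠ 0) (hΔ2 : Δ ^ 2 = A.trace ^ 2 - 4 * A.det) :
    exp A * exp B
      = exp (B + (Complex.sinh Δ / Δ) • ⁅A, B⁆
          + ((Complex.cosh Δ - 1) / Δ ^ 2) • ⁅A, ⁅A, B⁆⁆) * exp A := by
  classical
  set t : ℂ := A.trace with ht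
  set d : ℂ := A.det with hd
  set lm : ℂ := (t - Δ) / 2 with hlm
  set Q : Matrix (Fin 2) (Fin 2) ℂ := Δ⁻¹ • (A - lm • 1) with hQdef
  -- Cayley–Hamilton for 2×2
  have hCH : A * A = t • A - d • (1 : Matrix (Fin 2) (Fin 2) ℂ) := by
    ext i j
    fin_cases i <;> fin_cases j <;>
      simp [Matrix.mul_apply, Fin.sum_univ_two, ht, hd, Matrix.det_fin_two,
        Matrix.trace_fin_two, Matrix.one_apply] <;> ring
  have hAQ : A = lm • 1 + Δ • Q := by
    rw [hQdef, smul_smul, mul_inv_cancel₀ hΔ, one_smul]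
    abel
  have hQQ : Q * Q = Q := by
    rw [hQdef, smul_mul_smul_comm]
    have hXX : (A - lm • 1) * (A - lm • 1) = Δ • (A - lm • 1) := by
      have expand : (A - lm • (1 : Matrix (Fin 2) (Fin 2) ℂ)) * (A - lm • 1)
          = A * A - (2 * lm) • A + (lm * lm) • 1 := by
        simp only [sub_mul, mul_sub, smul_mul_assoc, mul_smul_comm, mul_one, one_mul,
          smul_smul]
        module
      rw [expand, hCH]
      match_scalars
      · rw [hlm]; ring
      · rw [hlm]; linear_combination (-(1 : ℂ)/4) * hΔ2
    rw [hXX, smul_smul]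
    congr 1
    field_simp
  -- commutators in terms of Q
  have hAB : ⁅A, B⁆ = Δ • (Q * B - B * Q) := by
    rw [Ring.lie_def, hAQ]
    simp only [add_mul, mul_add, smul_mul_assoc, mul_smul_comm, one_mul, mul_one]
    module
  have h1 : Q * (Q * B) = Q * B := by rw [← mul_assoc, hQQ]
  have hAAB : ⁅A, ⁅A, B⁆⁆ = (Δ ^ 2) • (Q * B + B * Q - (2 : ℂ) • (Q * (B * Q))) := by
    rw [hAB, Ring.lie_def, hAQ]
    simp only [add_mul, mul_add, mul_sub, sub_mul, smul_mul_assoc, mul_smul_comm,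
      one_mul, mul_one, smul_sub, smul_add, mul_assoc, hQQ, h1, smul_smul]
    match_scalars <;> ring
  -- exponentials
  have hexp : ∀ a e : ℂ, exp (a • (1 : Matrix (Fin 2) (Fin 2) ℂ) + e • Q)
      = Complex.exp a • (1 + (Complex.exp e - 1) • Q) := by
    intro a e
    rw [Matrix.exp_add_of_commute _ _
      (((Commute.one_left Q).smul_left a).smul_right e)]
    rw [my_exp_smul_idem Q hQQ e, my_exp_smul_idem 1 (one_mul 1) a]
    have h2 : (1 : Matrix (Fin 2) (Fin 2) ℂ) + (Complex.exp a - 1) • 1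
        = Complex.exp a • 1 := by module
    rw [h2, smul_mul_assoc, one_mul]
  have hexpA : exp A = Complex.exp lm • (1 + (Complex.exp Δ - 1) • Q) := by
    conv_lhs => rw [hAQ]
    exact hexp lm Δ
  have hexpnA : exp (-A) = Complex.exp (-lm) • (1 + (Complex.exp (-Δ) - 1) • Q) := by
    have hn : -A = (-lm) • (1 : Matrix (Fin 2) (Fin 2) ℂ) + (-Δ) • Q := by
      rw [hAQ]; module
    rw [hn]
    exact hexp (-lm) (-Δ)
  -- the key conjugation identity
  have hsinh : Complex.sinh Δ = (Complex.exp Δ - Complex.exp (-Δ)) / 2 := by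
    have h := Complex.two_sinh (x := Δ)
    linear_combination h / 2
  have hcosh : Complex.cosh Δ = (Complex.exp Δ + Complex.exp (-Δ)) / 2 := by
    have h := Complex.two_cosh (x := Δ)
    linear_combination h / 2
  have hkey : B + (Complex.sinh Δ / Δ) • ⁅A, B⁆
      + ((Complex.cosh Δ - 1) / Δ ^ 2) • ⁅A, ⁅A, B⁆⁆ = exp A * B * exp (-A) := by
    rw [hAAB, hAB, hexpA, hexpnA, smul_smul, smul_smul,
      div_mul_cancel₀ _ hΔ, div_mul_cancel₀ _ (pow_ne_zero 2 hΔ),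
      hsinh, hcosh, Complex.exp_neg Δ, Complex.exp_neg lm]
    simp only [smul_mul_assoc, mul_smul_comm, smul_smul, add_mul, mul_add, one_mul,
      mul_one, sub_mul, mul_sub, smul_sub, smul_add, mul_assoc]
    match_scalars <;> field_simp [Complex.exp_ne_zero] <;> ring
  have hU : IsUnit (exp A) := Matrix.isUnit_exp A
  rw [hkey, Matrix.exp_neg A, Matrix.exp_conj _ _ hU,
    Matrix.nonsing_inv_mul_cancel_right _ _ ((Matrix.isUnit_iff_isUnit_det _).mp hU)]
end

section
/- With h₁(a₀,a) = −log(a/a₀) and F as above, the function h₃(Δ; a₀, a_S) = −(1/(2Δ))·(a_S F₋(Δ;a₀,a_S) − a₀ F₋(Δ;a₀,a₀)) equals the integral ∫_{a₀}^{a_S} (da/(1+b₁a)) · sinh(Δ·h₁(a₀,a))/Δ, for Δ > 0, b₁ ≥ 0, 0 < a₀ ≤ a_S with b₁ a_S < 1. -/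
/-- The Gauss hypergeometric series `₂F₁(1, 1+Δ; 2+Δ; z) = Σₖ (1+Δ)/(1+Δ+k) zᵏ`. -/
noncomputable def twoF1 (Δ z : ℝ) : ℝ := ∑' k : ℕ, ((1 + Δ) / (1 + Δ + k)) * z ^ k

/-- `F(Δ; a₀, a) = (a/a₀)^Δ (1/(1+Δ)) ₂F₁(1,1+Δ;2+Δ;−b₁a)`. -/
noncomputable def Ffun (b₁ Δ a₀ a : ℝ) : ℝ :=
  (a / a₀) ^ Δ * (1 / (1 + Δ)) * twoF1 Δ (-(b₁ * a))

open MeasureTheory intervalIntegral Real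

/-- The basic integrand is interval integrable on `[0, a]`. -/
lemma integrand_intInt (b₁ a₀ a Δ : ℝ) (hΔ : -1 < Δ) (hb : 0 ≤ b₁) (ha₀ : 0 < a₀)
    (ha : 0 ≤ a) :
    IntervalIntegrable (fun u => (u / a₀) ^ Δ / (1 + b₁ * u)) volume 0 a := by
  have h1 : IntervalIntegrable (fun u : ℝ => u ^ Δ) volume 0 a :=
    intervalIntegrable_rpow' hΔ
  have h2 : IntervalIntegrable
      (fun u : ℝ => u ^ Δ * (a₀ ^ (-Δ) / (1 + b₁ * u))) volume 0 a := by
    apply h1.mul_continuousOn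
    apply ContinuousOn.div continuousOn_const (by fun_prop)
    intro u hu
    rw [Set.uIcc_of_le ha] at hu
    nlinarith [hu.1]
  apply h2.congr
  intro u hu
  rw [Set.uIoc_of_le ha] at hu
  show u ^ Δ * (a₀ ^ (-Δ) / (1 + b₁ * u)) = (u / a₀) ^ Δ / (1 + b₁ * u)
  rw [Real.div_rpow hu.1.le ha₀.le, Real.rpow_neg ha₀.le]
  ring

/-- Key lemma: `a · F(Δ; a₀, a) = ∫₀ᵃ (u/a₀)^Δ / (1 + b₁ u) du`. -/
lemma key_lemma (b₁ a₀ a Δ : ℝ) (hΔ : -1 < Δ) (hb : 0 ≤ b₁) (ha₀ : 0 < a₀)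
    (ha : 0 < a) (hba : b₁ * a < 1) :
    a * Ffun b₁ Δ a₀ a = ∫ u in (0:ℝ)..a, (u / a₀) ^ Δ / (1 + b₁ * u) := by
  set c : ℕ → ℝ := fun k => a₀ ^ (-Δ) * (-b₁) ^ k with hc
  set F : ℕ → ℝ → ℝ := fun k u => c k * u ^ (Δ + k) with hF
  have hΔk : ∀ k : ℕ, (-1 : ℝ) < Δ + k := by
    intro k; have : (0:ℝ) ≤ k := Nat.cast_nonneg k; linarith
  have hΔk1 : ∀ k : ℕ, (0 : ℝ) < Δ + k + 1 := by
    intro k; have := hΔk k; linarith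
  -- integrability of each term on Ioc 0 a
  have hFint : ∀ k : ℕ, IntegrableOn (F k) (Set.Ioc 0 a) volume := by
    intro k
    rw [← intervalIntegrable_iff_integrableOn_Ioc_of_le ha.le]
    exact (intervalIntegrable_rpow' (hΔk k)).const_mul (c k)
  -- value of each integral
  have hval : ∀ k : ℕ, ∫ u in Set.Ioc (0:ℝ) a, F k u
      = c k * (a ^ (Δ + k + 1) / (Δ + k + 1)) := by
    intro k
    rw [← intervalIntegral.integral_of_le ha.le]
    simp only [hF]
    rw [intervalIntegral.integral_const_mul, integral_rpow (Or.inl (hΔk k)),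
      Real.zero_rpow (ne_of_gt (hΔk1 k))]
    ring
  -- norm integrals
  have hnorm : ∀ k : ℕ, ∫ u in Set.Ioc (0:ℝ) a, ‖F k u‖
      = |c k| * (a ^ (Δ + k + 1) / (Δ + k + 1)) := by
    intro k
    have : ∫ u in Set.Ioc (0:ℝ) a, ‖F k u‖
        = ∫ u in Set.Ioc (0:ℝ) a, |c k| * u ^ (Δ + k) := by
      apply setIntegral_congr_fun measurableSet_Ioc
      intro u hu
      simp only [hF, norm_mul, Real.norm_eq_abs]
      rw [abs_of_nonneg (Real.rpow_nonneg hu.1.le _)]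
    rw [this, MeasureTheory.integral_const_mul, ← intervalIntegral.integral_of_le ha.le,
      integral_rpow (Or.inl (hΔk k)),
      Real.zero_rpow (ne_of_gt (hΔk1 k))]
    ring
  -- summability of the norm integrals
  have hsum : Summable fun k : ℕ => ∫ u in Set.Ioc (0:ℝ) a, ‖F k u‖ := by
    have hg : Summable fun k : ℕ => (a₀ ^ (-Δ) * (a ^ (Δ + 1) / (Δ + 1))) * (b₁ * a) ^ k :=
      (summable_geometric_of_lt_one (by positivity) hba).mul_left _
    apply Summable.of_nonneg_of_le (fun k => ?_) (fun k => ?_) hg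
    · rw [hnorm k]
      have := hΔk1 k
      positivity
    · rw [hnorm k]
      have hck : |c k| = a₀ ^ (-Δ) * b₁ ^ k := by
        rw [hc]; simp only [abs_mul, abs_pow, abs_neg,
          abs_of_nonneg (Real.rpow_nonneg ha₀.le (-Δ)), abs_of_nonneg hb]
      have hak : a ^ (Δ + (k:ℝ) + 1) = a ^ (Δ + 1) * a ^ (k:ℕ) := by
        rw [show Δ + (k:ℝ) + 1 = (Δ + 1) + (k:ℝ) by ring, Real.rpow_add ha,
          Real.rpow_natCast]
      rw [hck, hak]
      have h1 : (0:ℝ) < Δ + 1 := by linarith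
      have h2 : (0:ℝ) < Δ + k + 1 := hΔk1 k
      have h3 : Δ + 1 ≤ Δ + k + 1 := by
        have : (0:ℝ) ≤ k := Nat.cast_nonneg k; linarith
      have hfrac : a ^ (Δ + 1) * (a:ℝ) ^ (k:ℕ) / (Δ + k + 1)
          ≤ a ^ (Δ + 1) * a ^ (k:ℕ) / (Δ + 1) := by
        apply div_le_div_of_nonneg_left (by positivity) h1 h3
      calc a₀ ^ (-Δ) * b₁ ^ k * (a ^ (Δ + 1) * a ^ (k:ℕ) / (Δ + ↑k + 1))
          ≤ a₀ ^ (-Δ) * b₁ ^ k * (a ^ (Δ + 1) * a ^ (k:ℕ) / (Δ + 1)) := by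
            apply mul_le_mul_of_nonneg_left hfrac (by positivity)
        _ = a₀ ^ (-Δ) * (a ^ (Δ + 1) / (Δ + 1)) * (b₁ * a) ^ k := by
            rw [mul_pow]; ring
  -- pointwise sum of the series
  have hpt : ∀ u ∈ Set.Ioc (0:ℝ) a, (∑' k, F k u) = (u / a₀) ^ Δ / (1 + b₁ * u) := by
    intro u hu
    have hu0 : 0 < u := hu.1
    have hbu : |(-(b₁ * u))| < 1 := by
      rw [abs_neg, abs_of_nonneg (by positivity)]
      nlinarith [hu.2]
    have hterm : ∀ k : ℕ, F k u = (a₀ ^ (-Δ) * u ^ Δ) * (-(b₁ * u)) ^ k := by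
      intro k
      simp only [hF, hc]
      rw [Real.rpow_add hu0, Real.rpow_natCast,
        show (-(b₁ * u)) ^ k = (-b₁) ^ k * u ^ k by rw [← mul_pow]; ring_nf]
      ring
    rw [tsum_congr hterm, tsum_mul_left, tsum_geometric_of_abs_lt_one hbu,
      Real.div_rpow hu0.le ha₀.le, Real.rpow_neg ha₀.le]
    rw [sub_neg_eq_add]
    field_simp
  -- swap sum and integral
  have hswap : (∑' k, ∫ u in Set.Ioc (0:ℝ) a, F k u)
      = ∫ u in Set.Ioc (0:ℝ) a, (u / a₀) ^ Δ / (1 + b₁ * u) := by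
    rw [MeasureTheory.integral_tsum_of_summable_integral_norm hFint hsum]
    exact setIntegral_congr_fun measurableSet_Ioc hpt
  rw [intervalIntegral.integral_of_le ha.le, ← hswap]
  -- now compute the left-hand side as the same tsum
  have h1Δ : (0:ℝ) < 1 + Δ := by linarith
  rw [Ffun, twoF1]
  rw [← tsum_mul_left, ← tsum_mul_left]
  apply tsum_congr
  intro k
  rw [hval k]
  have e1 : a ^ (Δ + (k:ℝ) + 1) = a ^ Δ * a ^ (k:ℕ) * a := by
    rw [Real.rpow_add ha, Real.rpow_add ha, Real.rpow_one, Real.rpow_natCast]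
  have e2 : (a / a₀) ^ Δ = a ^ Δ * a₀ ^ (-Δ) := by
    rw [Real.div_rpow ha.le ha₀.le, Real.rpow_neg ha₀.le, div_eq_mul_inv]
  have e3 : (-(b₁ * a)) ^ k = (-b₁) ^ k * a ^ (k:ℕ) := by
    rw [← mul_pow]; ring_nf
  have h2 : (0:ℝ) < Δ + k + 1 := hΔk1 k
  have h2' : (0:ℝ) < 1 + Δ + k := by linarith
  rw [hc, e1, e2, e3]
  field_simp
  ring

/-- `h₃` equals `∫_{a₀}^{a_S} da/(1+b₁a) · sinh(Δ h₁(a₀,a))/Δ`. -/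
theorem h3_integral_representation
    (b₁ a₀ aS Δ : ℝ) (hΔ0 : 0 < Δ) (hΔ1 : Δ < 1) (hb : 0 ≤ b₁)
    (ha₀ : 0 < a₀) (haa : a₀ ≤ aS) (hba : b₁ * aS < 1) :
    -(1 / (2 * Δ)) * (aS * (Ffun b₁ Δ a₀ aS - Ffun b₁ (-Δ) a₀ aS)
        - a₀ * (Ffun b₁ Δ a₀ a₀ - Ffun b₁ (-Δ) a₀ a₀))
      = ∫ a in a₀..aS,
          (1 / (1 + b₁ * a)) * (Real.sinh (Δ * (-Real.log (a / a₀))) / Δ) := by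
  have haS : 0 < aS := lt_of_lt_of_le ha₀ haa
  have hΔm : (-1:ℝ) < Δ := by linarith
  have hΔm' : (-1:ℝ) < -Δ := by linarith
  have hba₀ : b₁ * a₀ < 1 := lt_of_le_of_lt (by nlinarith) hba
  -- closed forms via the key lemma
  have hI1 : aS * Ffun b₁ Δ a₀ aS - a₀ * Ffun b₁ Δ a₀ a₀
      = ∫ u in a₀..aS, (u / a₀) ^ Δ / (1 + b₁ * u) := by
    rw [key_lemma b₁ a₀ aS Δ hΔm hb ha₀ haS hba,
      key_lemma b₁ a₀ a₀ Δ hΔm hb ha₀ ha₀ hba₀,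
      intervalIntegral.integral_interval_sub_left
        (integrand_intInt b₁ a₀ aS Δ hΔm hb ha₀ haS.le)
        (integrand_intInt b₁ a₀ a₀ Δ hΔm hb ha₀ ha₀.le)]
  have hI2 : aS * Ffun b₁ (-Δ) a₀ aS - a₀ * Ffun b₁ (-Δ) a₀ a₀
      = ∫ u in a₀..aS, (u / a₀) ^ (-Δ) / (1 + b₁ * u) := by
    rw [key_lemma b₁ a₀ aS (-Δ) hΔm' hb ha₀ haS hba,
      key_lemma b₁ a₀ a₀ (-Δ) hΔm' hb ha₀ ha₀ hba₀,
      intervalIntegral.integral_interval_sub_left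
        (integrand_intInt b₁ a₀ aS (-Δ) hΔm' hb ha₀ haS.le)
        (integrand_intInt b₁ a₀ a₀ (-Δ) hΔm' hb ha₀ ha₀.le)]
  -- interval integrability on [a₀, aS]
  have hcont : ∀ γ : ℝ, IntervalIntegrable
      (fun u => (u / a₀) ^ γ / (1 + b₁ * u)) volume a₀ aS := by
    intro γ
    apply ContinuousOn.intervalIntegrable
    apply ContinuousOn.div
    · apply ContinuousOn.rpow_const (continuousOn_id.div_const a₀)
      intro u hu
      rw [Set.uIcc_of_le haa] at hu
      have hu0 : 0 < u := lt_of_lt_of_le ha₀ hu.1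
      exact Or.inl (by simp only [id]; positivity)
    · fun_prop
    · intro u hu
      rw [Set.uIcc_of_le haa] at hu
      have : 0 ≤ u := le_trans ha₀.le hu.1
      positivity
  have step : -(1 / (2 * Δ)) * (aS * (Ffun b₁ Δ a₀ aS - Ffun b₁ (-Δ) a₀ aS)
        - a₀ * (Ffun b₁ Δ a₀ a₀ - Ffun b₁ (-Δ) a₀ a₀))
      = ∫ u in a₀..aS, -(1 / (2 * Δ)) *
          ((u / a₀) ^ Δ / (1 + b₁ * u) - (u / a₀) ^ (-Δ) / (1 + b₁ * u)) := by
    rw [intervalIntegral.integral_const_mul,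
      intervalIntegral.integral_sub (hcont Δ) (hcont (-Δ)), ← hI1, ← hI2]
    ring
  rw [step]
  apply intervalIntegral.integral_congr
  intro u hu
  rw [Set.uIcc_of_le haa] at hu
  have hu0 : 0 < u := lt_of_lt_of_le ha₀ hu.1
  have ht : 0 < u / a₀ := by positivity
  have hbu : 0 < 1 + b₁ * u := by positivity
  simp only
  rw [Real.sinh_eq,
    show Δ * -Real.log (u / a₀) = Real.log (u / a₀) * (-Δ) by ring,
    ← Real.rpow_def_of_pos ht,
    show -(Real.log (u / a₀) * (-Δ)) = Real.log (u / a₀) * Δ by ring,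
    ← Real.rpow_def_of_pos ht]
  have hΔne : Δ ≠ 0 := ne_of_gt hΔ0
  have hbune : (1 + b₁ * u) ≠ 0 := ne_of_gt hbu
  field_simp
  ring
end

section
/- Define the truncated NLO evolution operator E_tr(a₀,a_S) = exp(h₁ R₀) + a_S U₁ exp(h₁ R₀) − a₀ exp(h₁ R₀) U₁ with h₁ = h₁(a₀,a_S) = −log(a_S/a₀), where U₁ satisfies the commutation relation [R₀, U₁] + U₁ = −R₁ (with R₁ = P₁/β₀ − b₁R₀). Then the violation V_tr(a₀,a_S) := β(a_S)·∂E_tr/∂a_S − (a_S P₀ + a_S² P₁) E_tr, with β(a_S) = −β₀a_S² − β₁a_S³ and P₀ = β₀R₀, P₁ = β₀(R₁ + b₁R₀), evaluated at a_S = a₀ equals a₀³ β₁ R₁; in particular V_tr(a₀,a₀) ≠ 0 whenever R₁ ≠ 0 and β₁ ≠ 0. -/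
attribute [local instance] Matrix.linftyOpNormedRing Matrix.linftyOpNormedAlgebra
  Matrix.linftyOpNormedSpace

open NormedSpace in
/-- the violation of the truncated NLO solution at the input scale
equals `a₀³ β₁ R₁`, which is nonzero when `R₁ ≠ 0` and `β₁ ≠ 0`. -/
theorem truncated_solution_violation_at_input
    {n : ℕ} (R₀ R₁ U₁ : Matrix (Fin n) (Fin n) ℂ)
    (β₀ β₁ b₁ a₀ : ℝ) (hβ₀ : β₀ ≠ 0) (hb₁ : b₁ = β₁ / β₀) (ha₀ : 0 < a₀)
    (hU₁ : ⁅R₀, U₁⁆ + U₁ = -R₁)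
    (Etr : ℝ → Matrix (Fin n) (Fin n) ℂ)
    (hEtr : ∀ a : ℝ, Etr a =
      exp ((-(Real.log (a / a₀)) : ℂ) • R₀)
        + a • (U₁ * exp ((-(Real.log (a / a₀)) : ℂ) • R₀))
        - a₀ • (exp ((-(Real.log (a / a₀)) : ℂ) • R₀) * U₁))
    (P₀ P₁ : Matrix (Fin n) (Fin n) ℂ)
    (hP₀ : P₀ = β₀ • R₀) (hP₁ : P₁ = β₀ • (R₁ + b₁ • R₀))
    (Vtr : ℝ → Matrix (Fin n) (Fin n) ℂ)
    (hVtr : ∀ a : ℝ, Vtr a =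
      (-β₀ * a ^ 2 - β₁ * a ^ 3) • deriv Etr a
        - (a • P₀ + (a ^ 2 : ℝ) • P₁) * Etr a) :
    Vtr a₀ = (a₀ ^ 3 * β₁) • R₁ ∧ (R₁ ≠ 0 → β₁ ≠ 0 → Vtr a₀ ≠ 0) := by
  have ha₀' : a₀ ≠ 0 := ne_of_gt ha₀
  -- derivative of the scalar exponent
  have hlog : HasDerivAt (fun a : ℝ => Real.log (a / a₀)) (1 / a₀) a₀ := by
    have h1 : HasDerivAt (fun a : ℝ => a / a₀) (1 / a₀) a₀ := by
      simpa using (hasDerivAt_id a₀).div_const a₀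
    have h2 := h1.log (by simp [div_self ha₀'])
    simpa [div_self ha₀'] using h2
  have hc : HasDerivAt (fun a : ℝ => (-(Real.log (a / a₀) : ℂ)))
      (-((1 / a₀ : ℝ) : ℂ)) a₀ := hlog.ofReal_comp.neg
  -- derivative of the matrix exponential factor
  have hF : HasDerivAt (fun a : ℝ => exp ((-(Real.log (a / a₀)) : ℂ) • R₀))
      ((-((1 / a₀ : ℝ) : ℂ)) • R₀) a₀ := by
    have hg : HasDerivAt (fun z : ℂ => exp (z • R₀)) R₀ (-(Real.log (a₀ / a₀) : ℂ)) := by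
      have h0 : (-(Real.log (a₀ / a₀) : ℂ)) = 0 := by simp [div_self ha₀']
      rw [h0]
      have h := hasDerivAt_exp_smul_const (𝕂 := ℂ) R₀ (0 : ℂ)
      rw [zero_smul ℂ, exp_zero, one_mul] at h
      exact h
    have h3 := HasDerivAt.scomp (𝕜 := ℝ) (𝕜' := ℂ) (x := a₀) hg hc
    exact h3
  have hF0 : exp ((-(Real.log (a₀ / a₀)) : ℂ) • R₀) = 1 := by
    simp [div_self ha₀']
  -- full derivative of Etr at a₀
  have hEfun : Etr = fun a : ℝ =>
      exp ((-(Real.log (a / a₀)) : ℂ) • R₀)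
        + a • (U₁ * exp ((-(Real.log (a / a₀)) : ℂ) • R₀))
        - a₀ • (exp ((-(Real.log (a / a₀)) : ℂ) • R₀) * U₁) := funext hEtr
  have h1 : HasDerivAt (fun a : ℝ =>
      a • (U₁ * exp ((-(Real.log (a / a₀)) : ℂ) • R₀)))
      (a₀ • (U₁ * ((-((1 / a₀ : ℝ) : ℂ)) • R₀))
        + (1 : ℝ) • (U₁ * exp ((-(Real.log (a₀ / a₀)) : ℂ) • R₀))) a₀ :=
    (hasDerivAt_id a₀).smul (hF.const_mul U₁)
  have h2 : HasDerivAt (fun a : ℝ =>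
      a₀ • (exp ((-(Real.log (a / a₀)) : ℂ) • R₀) * U₁))
      (a₀ • (((-((1 / a₀ : ℝ) : ℂ)) • R₀) * U₁)) a₀ := (hF.mul_const U₁).const_smul a₀
  have hD : HasDerivAt Etr
      (((-((1 / a₀ : ℝ) : ℂ)) • R₀
        + (a₀ • (U₁ * ((-((1 / a₀ : ℝ) : ℂ)) • R₀))
          + (1 : ℝ) • (U₁ * exp ((-(Real.log (a₀ / a₀)) : ℂ) • R₀))))
        - a₀ • (((-((1 / a₀ : ℝ) : ℂ)) • R₀) * U₁)) a₀ := by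
    rw [hEfun]; exact (hF.add h1).sub h2
  have hderiv := hD.deriv
  have hE0 : Etr a₀ = 1 := by
    rw [hEtr, hF0]; simp
  have hbb : β₀ * b₁ = β₁ := by rw [hb₁]; field_simp
  have hU₁' : R₀ * U₁ = -R₁ - U₁ + U₁ * R₀ := by
    rw [Ring.lie_def] at hU₁
    rw [← hU₁]; abel
  have key : Vtr a₀ = (a₀ ^ 3 * β₁) • R₁ := by
    rw [hVtr]; erw [hderiv]; rw [hE0, hP₀, hP₁, hF0]
    simp only [smul_mul_assoc, mul_smul_comm, mul_one]
    rw [hU₁', ← hbb]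
    have ha₀c : (a₀ : ℂ) ≠ 0 := by exact_mod_cast ha₀'
    have hbbc : (β₀ : ℂ) * (b₁ : ℂ) = (β₁ : ℂ) := by exact_mod_cast hbb
    match_scalars <;> simp only [Algebra.cast, Complex.coe_algebraMap] <;> field_simp [← hbbc] <;> ring
  refine ⟨key, fun hR₁ hβ₁ h0 => ?_⟩
  rw [key] at h0
  have : (a₀ ^ 3 * β₁) ≠ 0 := by positivity
  exact hR₁ (by simpa [this] using (smul_eq_zero.mp h0))
end
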